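/- Let A ∈ ℝ^{n×N} have unit-norm columns a_1,…,a_N, let W_1,…,W_N be subspaces of ℝ^M, and let Y ∈ ℝ^{n×M}. If c⁰ is a block coefficient vector satisfying A·U(c⁰) = Y and ‖c⁰‖_{2,0} < (1/2)(1 + μ_f^{-1}), where μ_f is the fusion coherence of (A,(W_j)), then c⁰ is the unique solution of problem (P1), i.e., every block vector c ≠ c⁰ with A·U(c) = Y satisfies ‖c⁰‖_{2,1} < ‖c‖_{2,1}. -/

import Mathlib

open scoped BigOperators
open Matrix

/-- Euclidean norm of a finite-dimensional real vector. -/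
noncomputable def norm2 {ι : Type*} [Fintype ι] (v : ι → ℝ) : ℝ :=
  Real.sqrt (∑ i, v i ^ 2)

/-- Mixed ℓ₂,₁ norm of a block coefficient vector. -/
noncomputable def l21 {N : ℕ} {m : Fin N → ℕ} (c : ∀ j, Fin (m j) → ℝ) : ℝ :=
  ∑ j, norm2 (c j)

open Classical in
/-- Mixed ℓ₂,₀ "norm": number of nonzero blocks. -/
noncomputable def l20 {N : ℕ} {m : Fin N → ℕ} (c : ∀ j, Fin (m j) → ℝ) : ℕ :=
  (Finset.univ.filter fun j => c j ≠ 0).card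

/-- The matrix U(c) whose j-th row is (U_j c_j)ᵀ. -/
noncomputable def Ucmat {N M : ℕ} {m : Fin N → ℕ}
    (U : ∀ j, Matrix (Fin M) (Fin (m j)) ℝ)
    (c : ∀ j, Fin (m j) → ℝ) : Matrix (Fin N) (Fin M) ℝ :=
  Matrix.of fun j i => (U j).mulVec (c j) i

/-- The ℓ₂ → ℓ₂ operator norm of a real matrix. -/
noncomputable def opNorm {ι κ : Type*} [Fintype ι] [Fintype κ]
    (B : Matrix ι κ ℝ) : ℝ :=
  sSup {r : ℝ | ∃ v : κ → ℝ, norm2 v ≤ 1 ∧ r = norm2 (B.mulVec v)}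

/-- Fusion coherence: max over j ≠ k of |⟨a_j,a_k⟩|·‖P_j P_k‖₂→₂. -/
noncomputable def fusionCoherence {n N M : ℕ} (A : Matrix (Fin n) (Fin N) ℝ)
    (P : Fin N → Matrix (Fin M) (Fin M) ℝ) : ℝ :=
  sSup {r : ℝ | ∃ j k : Fin N, j ≠ k ∧
    r = |∑ i, A i j * A i k| * opNorm (P j * P k)}

/-! Put `h = c - c₀ ≠ 0` and `v_j = U_j h_j ∈ W_j`, so that `‖v_j‖ = ‖h_j‖`. Since `A·U(h) = 0`
and `‖a_j‖ = 1`, row `j` of `AᵀA·U(h) = 0` reads `v_j = -∑_{k≠j} ⟨a_j,a_k⟩ v_k`; applying `P_j`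
and writing `v_k = P_k v_k` gives `‖h_j‖ ≤ μ_f ∑_{k≠j} ‖h_k‖`. Summed over the support `S` of
`c₀`, the sparsity bound turns this into the null space property
`2 ∑_{j∈S} ‖h_j‖ < ‖h‖_{2,1}`, and the triangle inequality on `S` then gives
`‖c₀‖_{2,1} < ‖c₀ + h‖_{2,1}`. -/

section norm2

variable {ι : Type*} [Fintype ι]

lemma norm2_eq_norm (v : ι → ℝ) : norm2 v = ‖WithLp.toLp 2 v‖ := by
  simp [norm2, EuclideanSpace.norm_eq]

lemma norm2_eq_sqrt_dotProduct (v : ι → ℝ) : norm2 v = √(v ⬝ᵥ v) := by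
  simp [norm2, dotProduct, sq]

lemma norm2_nonneg (v : ι → ℝ) : 0 ≤ norm2 v := Real.sqrt_nonneg _

lemma norm2_pos {v : ι → ℝ} (hv : v ≠ 0) : 0 < norm2 v := by
  simpa [norm2_eq_norm] using hv

lemma norm2_neg (v : ι → ℝ) : norm2 (-v) = norm2 v := by
  simp [norm2_eq_norm]

lemma norm2_smul (a : ℝ) (v : ι → ℝ) : norm2 (a • v) = |a| * norm2 v := by
  simp [norm2_eq_norm, norm_smul]

lemma norm2_sum_le {κ : Type*} (s : Finset κ) (f : κ → ι → ℝ) :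
    norm2 (∑ k ∈ s, f k) ≤ ∑ k ∈ s, norm2 (f k) := by
  simpa [norm2_eq_norm, WithLp.toLp_sum] using norm_sum_le s fun k => WithLp.toLp 2 (f k)

lemma norm2_le_norm2_add_norm2_sub (u v : ι → ℝ) : norm2 u ≤ norm2 v + norm2 (v - u) := by
  simp only [norm2_eq_norm, WithLp.toLp_sub, norm_sub_rev (WithLp.toLp 2 v)]
  exact norm_le_norm_add_norm_sub' _ _

lemma dotProduct_self_eq_one_of_norm2_eq_one {v : ι → ℝ} (hv : norm2 v = 1) : v ⬝ᵥ v = 1 := by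
  rwa [norm2_eq_sqrt_dotProduct, Real.sqrt_eq_one] at hv

lemma norm2_mulVec_of_transpose_mul_self {κ : Type*} [Fintype κ] [DecidableEq κ]
    {U : Matrix ι κ ℝ} (hU : Uᵀ * U = 1) (x : κ → ℝ) : norm2 (U *ᵥ x) = norm2 x := by
  rw [norm2_eq_sqrt_dotProduct, norm2_eq_sqrt_dotProduct, dotProduct_mulVec, ← mulVec_transpose,
    mulVec_mulVec, hU, one_mulVec]

end norm2

section opNorm

variable {ι κ : Type*} [Fintype ι] [Fintype κ] [DecidableEq κ]

lemma opNorm_eq_norm_toEuclideanLin (B : Matrix ι κ ℝ) :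
    opNorm B = ‖LinearMap.toContinuousLinearMap (Matrix.toEuclideanLin B)‖ := by
  rw [← ContinuousLinearMap.sSup_unitClosedBall_eq_norm, opNorm]
  congr 1
  ext r
  constructor
  · rintro ⟨v, hv, rfl⟩
    exact ⟨WithLp.toLp 2 v, by simpa [norm2_eq_norm] using hv, by simp [norm2_eq_norm]⟩
  · rintro ⟨x, hx, rfl⟩
    exact ⟨x.ofLp, by simpa [norm2_eq_norm] using hx, by rw [norm2_eq_norm]; rfl⟩

lemma norm2_mulVec_le_opNorm_mul (B : Matrix ι κ ℝ) (v : κ → ℝ) :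
    norm2 (B *ᵥ v) ≤ opNorm B * norm2 v := by
  simpa [opNorm_eq_norm_toEuclideanLin, norm2_eq_norm] using
    (LinearMap.toContinuousLinearMap (Matrix.toEuclideanLin B)).le_opNorm (WithLp.toLp 2 v)

end opNorm

lemma le_fusionCoherence {n N M : ℕ} (A : Matrix (Fin n) (Fin N) ℝ)
    (P : Fin N → Matrix (Fin M) (Fin M) ℝ) {j k : Fin N} (hjk : j ≠ k) :
    |∑ i, A i j * A i k| * opNorm (P j * P k) ≤ fusionCoherence A P := by
  refine le_csSup ((Set.finite_range fun jk : Fin N × Fin N =>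
    |∑ i, A i jk.1 * A i jk.2| * opNorm (P jk.1 * P jk.2)).subset ?_).bddAbove
    ⟨j, k, hjk, rfl⟩
  rintro - ⟨j, k, -, rfl⟩
  exact ⟨(j, k), rfl⟩

lemma row_eq_neg_sum_erase_of_mul_eq_zero {n ι κ : Type*} [Fintype n] [Fintype ι]
    [DecidableEq ι] {A : Matrix n ι ℝ} {X : Matrix ι κ ℝ} (hX : A * X = 0) {j : ι}
    (hj : (Aᵀ * A) j j = 1) :
    X j = -∑ k ∈ Finset.univ.erase j, (Aᵀ * A) j k • X k := by
  have hrow : ∑ k, (Aᵀ * A) j k • X k = 0 := by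
    rw [← vecMul_eq_sum, ← mul_apply_eq_vecMul, Matrix.mul_assoc, hX, Matrix.mul_zero]
    rfl
  rw [← Finset.add_sum_erase _ _ (Finset.mem_univ j), hj, one_smul] at hrow
  exact eq_neg_of_add_eq_zero_left hrow

lemma mul_transpose_mulVec_mulVec {ι κ : Type*} [Fintype ι] [Fintype κ] [DecidableEq κ]
    {U : Matrix ι κ ℝ} (hU : Uᵀ * U = 1) (x : κ → ℝ) : (U * Uᵀ) *ᵥ (U *ᵥ x) = U *ᵥ x := by
  rw [mulVec_mulVec, Matrix.mul_assoc, hU, Matrix.mul_one]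

lemma two_mul_sum_lt_sum_of_le_mul_sum_erase {ι : Type*} [Fintype ι] [DecidableEq ι]
    {t : ι → ℝ} {μ : ℝ} (s : Finset ι) (ht : ∀ j, 0 ≤ t j) (hpos : 0 < ∑ j, t j)
    (hle : ∀ j, t j ≤ μ * ∑ k ∈ Finset.univ.erase j, t k)
    (hs : (s.card : ℝ) < (1 + μ⁻¹) / 2) :
    2 * ∑ j ∈ s, t j < ∑ j, t j := by
  set T := ∑ j, t j
  have herase : ∀ j, ∑ k ∈ Finset.univ.erase j, t k = T - t j := fun j =>
    Finset.sum_erase_eq_sub (Finset.mem_univ j)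
  have hμ : 0 < μ := by
    by_contra! hμ
    have hT : T ≤ 0 := Finset.sum_nonpos fun j _ => (hle j).trans
      (mul_nonpos_of_nonpos_of_nonneg hμ (Finset.sum_nonneg fun k _ => ht k))
    linarith
  have hsum : (1 + μ) * ∑ j ∈ s, t j ≤ μ * s.card * T := by
    calc (1 + μ) * ∑ j ∈ s, t j = ∑ j ∈ s, (1 + μ) * t j := Finset.mul_sum ..
      _ ≤ ∑ _j ∈ s, μ * T := Finset.sum_le_sum fun j _ => by
          have := hle j
          rw [herase, mul_sub] at this
          linarith
      _ = μ * s.card * T := by rw [Finset.sum_const, nsmul_eq_mul]; ring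
  have hcard : 2 * μ * s.card < 1 + μ := by
    have := mul_lt_mul_of_pos_left hs (by positivity : 0 < 2 * μ)
    rwa [show 2 * μ * ((1 + μ⁻¹) / 2) = 1 + μ by field_simp; ring] at this
  have := mul_lt_mul_of_pos_right hcard hpos
  nlinarith

section blocks

variable {n N M : ℕ} {m : Fin N → ℕ}

lemma Ucmat_sub (U : ∀ j, Matrix (Fin M) (Fin (m j)) ℝ) (c c' : ∀ j, Fin (m j) → ℝ) :
    Ucmat U (c - c') = Ucmat U c - Ucmat U c' := by
  ext j i
  simp [Ucmat, mulVec_sub]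

lemma l21_pos {c : ∀ j, Fin (m j) → ℝ} (hc : c ≠ 0) : 0 < l21 c := by
  obtain ⟨j, hj⟩ := Function.ne_iff.mp hc
  exact (norm2_pos hj).trans_le
    (Finset.single_le_sum (fun k _ => norm2_nonneg (c k)) (Finset.mem_univ j))

lemma norm2_le_fusionCoherence_mul_sum_erase {A : Matrix (Fin n) (Fin N) ℝ}
    (hA : ∀ j, norm2 (fun i => A i j) = 1) {U : ∀ j, Matrix (Fin M) (Fin (m j)) ℝ}
    (hU : ∀ j, (U j)ᵀ * U j = 1) {h : ∀ j, Fin (m j) → ℝ} (hker : A * Ucmat U h = 0)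
    (j : Fin N) :
    norm2 (h j) ≤ fusionCoherence A (fun j => U j * (U j)ᵀ) *
      ∑ k ∈ Finset.univ.erase j, norm2 (h k) := by
  set P : Fin N → Matrix (Fin M) (Fin M) ℝ := fun j => U j * (U j)ᵀ
  set v := Ucmat U h
  have hv : ∀ k, norm2 (v k) = norm2 (h k) := fun k =>
    norm2_mulVec_of_transpose_mul_self (hU k) (h k)
  have hPv : ∀ k, P k *ᵥ v k = v k := fun k => mul_transpose_mulVec_mulVec (hU k) (h k)
  have hvj : v j = -∑ k ∈ Finset.univ.erase j, (Aᵀ * A) j k • ((P j * P k) *ᵥ v k) := by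
    conv_lhs => rw [← hPv j, row_eq_neg_sum_erase_of_mul_eq_zero hker
      (dotProduct_self_eq_one_of_norm2_eq_one (hA j))]
    simp only [mulVec_neg, mulVec_sum, mulVec_smul, ← mulVec_mulVec, hPv]
  calc norm2 (h j) = norm2 (v j) := (hv j).symm
    _ ≤ ∑ k ∈ Finset.univ.erase j, |(Aᵀ * A) j k| * opNorm (P j * P k) * norm2 (h k) := by
        rw [hvj, norm2_neg]
        refine (norm2_sum_le _ _).trans (Finset.sum_le_sum fun k _ => ?_)
        rw [norm2_smul, mul_assoc, ← hv k]
        gcongr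
        exact norm2_mulVec_le_opNorm_mul _ _
    _ ≤ ∑ k ∈ Finset.univ.erase j, fusionCoherence A P * norm2 (h k) :=
        Finset.sum_le_sum fun k hk => mul_le_mul_of_nonneg_right
          (le_fusionCoherence A P (Finset.ne_of_mem_erase hk).symm) (norm2_nonneg _)
    _ = fusionCoherence A P * ∑ k ∈ Finset.univ.erase j, norm2 (h k) :=
        (Finset.mul_sum ..).symm

lemma l21_lt_of_two_mul_sum_lt {c₀ c : ∀ j, Fin (m j) → ℝ} (S : Finset (Fin N))
    (hS : ∀ j ∉ S, c₀ j = 0) (hnsp : 2 * ∑ j ∈ S, norm2 (c j - c₀ j) < l21 (c - c₀)) :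
    l21 c₀ < l21 c := by
  have hterm : ∀ j, norm2 (c₀ j) + norm2 (c j - c₀ j)
      - 2 * (if j ∈ S then norm2 (c j - c₀ j) else 0) ≤ norm2 (c j) := by
    intro j
    by_cases hj : j ∈ S
    · simp only [hj, if_true]
      linarith [norm2_le_norm2_add_norm2_sub (c₀ j) (c j)]
    · simp [hj, hS j hj, norm2]
  have hsum := Finset.sum_le_sum fun j (_ : j ∈ Finset.univ) => hterm j
  rw [Finset.sum_sub_distrib, Finset.sum_add_distrib, ← Finset.mul_sum,
    Finset.sum_ite_mem, Finset.univ_inter] at hsum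
  unfold l21 at hnsp ⊢
  simp only [Pi.sub_apply] at hnsp
  linarith

end blocks

/-- If A·U(c⁰)=Y and ‖c⁰‖₂,₀ < (1/2)(1 + μ_f⁻¹), then c⁰ is the unique
solution of (P1). -/
theorem stmt1 {n N M : ℕ} {m : Fin N → ℕ}
    (A : Matrix (Fin n) (Fin N) ℝ)
    (hA : ∀ j, norm2 (fun i => A i j) = 1)
    (U : ∀ j, Matrix (Fin M) (Fin (m j)) ℝ)
    (hU : ∀ j, (U j)ᵀ * U j = 1)
    (Y : Matrix (Fin n) (Fin M) ℝ)
    (c0 : ∀ j, Fin (m j) → ℝ)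
    (hc0 : A * Ucmat U c0 = Y)
    (hsparse : (l20 c0 : ℝ) <
      (1 + (fusionCoherence A (fun j => U j * (U j)ᵀ))⁻¹) / 2) :
    ∀ c : (∀ j, Fin (m j) → ℝ),
      A * Ucmat U c = Y → c ≠ c0 → l21 c0 < l21 c := by
  classical
  intro c hc hne
  have hker : A * Ucmat U (c - c0) = 0 := by
    rw [Ucmat_sub, Matrix.mul_sub, hc, hc0, sub_self]
  refine l21_lt_of_two_mul_sum_lt (Finset.univ.filter fun j => c0 j ≠ 0)
    (fun j hj => by simpa using hj) ?_
  exact two_mul_sum_lt_sum_of_le_mul_sum_erase _ (fun j => norm2_nonneg _)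
    (l21_pos (sub_ne_zero.mpr hne)) (norm2_le_fusionCoherence_mul_sum_erase hA hU hker) hsparse
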